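/- Let G be a graph admitting an impression of the complete bipartite graph K_{n,n} of order 2, with n ≥ 2. Then G has a hole of length at least 2n. -/

import Mathlib

def InducedCycle {V : Type*} (G : SimpleGraph V) (n : ℕ) : Prop :=
  ∃ f : ZMod n → V, Function.Injective f ∧
    ∀ i j : ZMod n, G.Adj (f i) (f j) ↔ (j = i + 1 ∨ i = j + 1)

/-!
Follow the Hamiltonian cycle `a₀ b₀ a₁ b₁ ⋯ b₍ₙ₋₁₎ a₀` of `K_{n,n}` through the impression: this
gives a closed walk `q₀ w₀ q₁ w₁ ⋯` in `G` alternating between the middle vertices `q_k` of the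
`2n` edges of the cycle and the common ends `w_k` of consecutive edges. Paths of edges with no
common end are disjoint and anticomplete, so the only chords of this walk join consecutive
middle vertices `q_k q_{k+1}`. Skipping `w_k` whenever `q_k` and `q_{k+1}` are adjacent leaves a
hole through all `2n` middle vertices.
-/

open Function Set

section PeriodicOrbit

variable {X : Type*} {σ : X → X} {x : X}

theorem iterate_val_natCast_minimalPeriod (k : ℕ) :
    σ^[((k : ZMod (minimalPeriod σ x))).val] x = σ^[k] x := by
  rw [ZMod.val_natCast, iterate_mod_minimalPeriod_eq]

theorem iterate_val_add_one_minimalPeriod [NeZero (minimalPeriod σ x)]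
    (i : ZMod (minimalPeriod σ x)) : σ^[(i + 1).val] x = σ (σ^[i.val] x) := by
  rw [show i + 1 = ((i.val + 1 : ℕ) : ZMod _) by simp, iterate_val_natCast_minimalPeriod,
    iterate_succ_apply']

theorem card_le_minimalPeriod {ι : Type*} [Fintype ι] (hx : x ∈ periodicPts σ) {e : ι → X}
    (he : Injective e) (hmem : ∀ k, ∃ i, σ^[i] x = e k) :
    Fintype.card ι ≤ minimalPeriod σ x := by
  choose i hi using hmem
  have hpos := minimalPeriod_pos_of_mem_periodicPts hx
  have hinj : Injective fun k => (⟨i k % minimalPeriod σ x, Nat.mod_lt _ hpos⟩ : Fin _) := by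
    intro k l hkl
    have hmod : i k % minimalPeriod σ x = i l % minimalPeriod σ x := congrArg Fin.val hkl
    apply he
    rw [← hi, ← hi, ← iterate_mod_minimalPeriod_eq, hmod, iterate_mod_minimalPeriod_eq]
  simpa using Fintype.card_le_of_injective _ hinj

theorem inducedCycle_minimalPeriod {V : Type*} (G : SimpleGraph V) (hx : x ∈ periodicPts σ)
    {S : Set X} (hxS : x ∈ S) (hσS : MapsTo σ S S) {v : X → V} (hv : InjOn v S)
    (hadj : ∀ y ∈ S, ∀ z ∈ S, G.Adj (v y) (v z) ↔ z = σ y ∨ y = σ z) :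
    InducedCycle G (minimalPeriod σ x) := by
  have : NeZero (minimalPeriod σ x) := ⟨(minimalPeriod_pos_of_mem_periodicPts hx).ne'⟩
  set g : ZMod (minimalPeriod σ x) → X := fun i => σ^[i.val] x
  have hgS : ∀ i, g i ∈ S := fun i => hσS.iterate _ hxS
  have hg : Injective g := fun i j h =>
    ZMod.val_injective _ (iterate_injOn_Iio_minimalPeriod (ZMod.val_lt i) (ZMod.val_lt j) h)
  have hgσ : ∀ i, g (i + 1) = σ (g i) := iterate_val_add_one_minimalPeriod
  refine ⟨v ∘ g, fun i j h => hg (hv (hgS i) (hgS j) h), fun i j => ?_⟩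
  rw [comp_apply, comp_apply, hadj _ (hgS i) _ (hgS j), ← hgσ, ← hgσ, hg.eq_iff, hg.eq_iff]

end PeriodicOrbit

namespace SimpleGraph

variable {ι V : Type*} (G : SimpleGraph V) (s : ι → ι) (q w : ι → V)

open Classical in
/-- On `ι ⊕ ι`, `inl k` stands for `q k` and `inr k` for `w k`: the walk `q₀ w₀ q₁ w₁ ⋯`
(with `s` as successor) that skips `w k` whenever `q k` and `q (s k)` are adjacent. -/
noncomputable def shortcut : ι ⊕ ι → ι ⊕ ι
  | .inl k => if G.Adj (q k) (q (s k)) then .inl (s k) else .inr k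
  | .inr k => .inl (s k)

def shortcutPts : Set (ι ⊕ ι) :=
  range Sum.inl ∪ Sum.inr '' {k | ¬ G.Adj (q k) (q (s k))}

variable {G s q w}

theorem shortcut_inl_of_adj {k : ι} (h : G.Adj (q k) (q (s k))) :
    G.shortcut s q (.inl k) = .inl (s k) := by
  simp [shortcut, h]

theorem shortcut_inl_of_not_adj {k : ι} (h : ¬ G.Adj (q k) (q (s k))) :
    G.shortcut s q (.inl k) = .inr k := by
  simp [shortcut, h]

@[simp]
theorem shortcut_inr (k : ι) : G.shortcut s q (.inr k) = .inl (s k) := rfl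

theorem mapsTo_shortcut : MapsTo (G.shortcut s q) (G.shortcutPts s q) (G.shortcutPts s q) := by
  rintro _ (⟨k, rfl⟩ | ⟨k, -, rfl⟩)
  · by_cases h : G.Adj (q k) (q (s k))
    · rw [shortcut_inl_of_adj h]; exact Or.inl ⟨s k, rfl⟩
    · rw [shortcut_inl_of_not_adj h]; exact Or.inr ⟨k, h, rfl⟩
  · exact Or.inl ⟨s k, rfl⟩

theorem exists_iterate_shortcut_eq_inl_succ (k : ι) :
    ∃ i, 0 < i ∧ (G.shortcut s q)^[i] (.inl k) = .inl (s k) := by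
  by_cases h : G.Adj (q k) (q (s k))
  · exact ⟨1, one_pos, shortcut_inl_of_adj h⟩
  · exact ⟨2, two_pos, by simp [shortcut_inl_of_not_adj h]⟩

theorem exists_iterate_shortcut_eq_inl_iterate (k : ι) (j : ℕ) :
    ∃ i, j ≤ i ∧ (G.shortcut s q)^[i] (.inl k) = .inl (s^[j] k) := by
  induction j with
  | zero => exact ⟨0, le_rfl, rfl⟩
  | succ j ih =>
    obtain ⟨i, hji, hi⟩ := ih
    obtain ⟨d, hd, hd'⟩ := exists_iterate_shortcut_eq_inl_succ (G := G) (q := q) (s^[j] k)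
    refine ⟨d + i, by omega, ?_⟩
    rw [iterate_add_apply, hi, hd', iterate_succ_apply']

theorem adj_shortcut (hqw : ∀ k, G.Adj (q k) (w k)) (hwq : ∀ k, G.Adj (w k) (q (s k)))
    {y : ι ⊕ ι} (hy : y ∈ G.shortcutPts s q) :
    G.Adj (Sum.elim q w y) (Sum.elim q w (G.shortcut s q y)) := by
  rcases hy with ⟨k, rfl⟩ | ⟨k, -, rfl⟩
  · by_cases h : G.Adj (q k) (q (s k))
    · rwa [shortcut_inl_of_adj h]
    · rw [shortcut_inl_of_not_adj h]; exact hqw k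
  · exact hwq k

theorem eq_shortcut_of_adj_inl_inr (hqw' : ∀ k l, G.Adj (q k) (w l) → k = l ∨ k = s l)
    {k l : ι} (hl : ¬ G.Adj (q l) (q (s l))) (h : G.Adj (q k) (w l)) :
    Sum.inr l = G.shortcut s q (.inl k) ∨ Sum.inl k = G.shortcut s q (.inr l) := by
  rcases hqw' k l h with rfl | rfl
  · exact Or.inl (shortcut_inl_of_not_adj hl).symm
  · exact Or.inr rfl

theorem eq_shortcut_of_adj (hqq : ∀ k l, G.Adj (q k) (q l) → l = s k ∨ k = s l)
    (hww : ∀ k l, ¬ G.Adj (w k) (w l)) (hqw' : ∀ k l, G.Adj (q k) (w l) → k = l ∨ k = s l)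
    {y z : ι ⊕ ι} (hy : y ∈ G.shortcutPts s q) (hz : z ∈ G.shortcutPts s q)
    (h : G.Adj (Sum.elim q w y) (Sum.elim q w z)) :
    z = G.shortcut s q y ∨ y = G.shortcut s q z := by
  rcases hy with ⟨k, rfl⟩ | ⟨k, hk, rfl⟩ <;> rcases hz with ⟨l, rfl⟩ | ⟨l, hl, rfl⟩
  · rcases hqq k l h with rfl | rfl
    · exact Or.inl (shortcut_inl_of_adj h).symm
    · exact Or.inr (shortcut_inl_of_adj h.symm).symm
  · exact eq_shortcut_of_adj_inl_inr hqw' hl h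
  · exact (eq_shortcut_of_adj_inl_inr hqw' hk h.symm).symm
  · exact absurd h (hww k l)

theorem exists_inducedCycle_card_le [Fintype ι] (k₀ : ι)
    (hreach : ∀ k, ∃ j, 0 < j ∧ s^[j] k₀ = k) (hinj : Injective (Sum.elim q w))
    (hqw : ∀ k, G.Adj (q k) (w k)) (hwq : ∀ k, G.Adj (w k) (q (s k)))
    (hqq : ∀ k l, G.Adj (q k) (q l) → l = s k ∨ k = s l)
    (hww : ∀ k l, ¬ G.Adj (w k) (w l)) (hqw' : ∀ k l, G.Adj (q k) (w l) → k = l ∨ k = s l) :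
    ∃ m, Fintype.card ι ≤ m ∧ InducedCycle G m := by
  have hvisit : ∀ k, ∃ i, 0 < i ∧ (G.shortcut s q)^[i] (.inl k₀) = .inl k := by
    intro k
    obtain ⟨j, hj, rfl⟩ := hreach k
    obtain ⟨i, hji, hi⟩ := exists_iterate_shortcut_eq_inl_iterate (G := G) (q := q) k₀ j
    exact ⟨i, by omega, hi⟩
  have hper : Sum.inl k₀ ∈ periodicPts (G.shortcut s q) := by
    obtain ⟨i, hi, hi'⟩ := hvisit k₀
    exact mk_mem_periodicPts hi hi'
  refine ⟨_, card_le_minimalPeriod hper Sum.inl_injective fun k => ?_,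
    inducedCycle_minimalPeriod G hper (Or.inl ⟨k₀, rfl⟩) mapsTo_shortcut hinj.injOn
      fun y hy z hz => ⟨eq_shortcut_of_adj hqq hww hqw' hy hz, ?_⟩⟩
  · obtain ⟨i, -, hi⟩ := hvisit k
    exact ⟨i, hi⟩
  · rintro (rfl | rfl)
    exacts [adj_shortcut hqw hwq hy, (adj_shortcut hqw hwq hz).symm]

end SimpleGraph

section Impression

variable {α β V : Type*} (G : SimpleGraph V) (a : α → V) (b : β → V) (p : α → β → V)

/-- `a`, `b` are the branch vertices of `K_{α,β}` and `p i j` the middle vertex of the edge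
`a i b j` in an impression of order two. -/
def SeparatedImpression : Prop :=
  ∀ i j i' j', i ≠ i' → j ≠ j' →
    ∀ u ∈ ({a i, b j, p i j} : Set V), ∀ v ∈ ({a i', b j', p i' j'} : Set V),
      u ≠ v ∧ ¬ G.Adj u v

variable {G a b p}

namespace SeparatedImpression

variable (h : SeparatedImpression G a b p)
include h

theorem ne_and_not_adj_branch [Nontrivial α] [Nontrivial β] {x y : α ⊕ β} (hxy : x ≠ y) :
    Sum.elim a b x ≠ Sum.elim a b y ∧ ¬ G.Adj (Sum.elim a b x) (Sum.elim a b y) := by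
  rcases x with i | j <;> rcases y with i' | j'
  · obtain ⟨j, j', hj⟩ := exists_pair_ne β
    exact h i j i' j' (by simpa using hxy) hj _ (by simp) _ (by simp)
  · obtain ⟨i', hi'⟩ := exists_ne i
    obtain ⟨j, hj⟩ := exists_ne j'
    exact h i j i' j' hi'.symm hj _ (by simp) _ (by simp)
  · obtain ⟨i, hi⟩ := exists_ne i'
    obtain ⟨j', hj'⟩ := exists_ne j
    exact h i j i' j' hi hj'.symm _ (by simp) _ (by simp)
  · obtain ⟨i, i', hi⟩ := exists_pair_ne α
    exact h i j i' j' hi (by simpa using hxy) _ (by simp) _ (by simp)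

theorem branch_injective [Nontrivial α] [Nontrivial β] : Injective (Sum.elim a b) :=
  fun _ _ hxy => by_contra fun hne => (h.ne_and_not_adj_branch hne).1 hxy

theorem not_adj_branch [Nontrivial α] [Nontrivial β] (x y : α ⊕ β) :
    ¬ G.Adj (Sum.elim a b x) (Sum.elim a b y) := by
  rcases eq_or_ne x y with rfl | hne
  exacts [G.irrefl, (h.ne_and_not_adj_branch hne).2]

theorem ne_and_not_adj_middle_branch [Nontrivial α] [Nontrivial β] {i : α} {j : β}
    {x : α ⊕ β} (hi : x ≠ .inl i) (hj : x ≠ .inr j) :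
    p i j ≠ Sum.elim a b x ∧ ¬ G.Adj (p i j) (Sum.elim a b x) := by
  rcases x with i' | j'
  · obtain ⟨j', hj'⟩ := exists_ne j
    exact h i j i' j' (by simpa [eq_comm] using hi) hj'.symm _ (by simp) _ (by simp)
  · obtain ⟨i', hi'⟩ := exists_ne i
    exact h i j i' j' hi'.symm (by simpa [eq_comm] using hj) _ (by simp) _ (by simp)

theorem middle_ne_branch [Nontrivial α] [Nontrivial β]
    (hmid : ∀ i j, G.Adj (a i) (p i j) ∧ G.Adj (p i j) (b j)) (i : α) (j : β) (x : α ⊕ β) :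
    p i j ≠ Sum.elim a b x := by
  by_cases hi : x = .inl i
  · exact hi ▸ (hmid i j).1.ne.symm
  by_cases hj : x = .inr j
  · exact hj ▸ (hmid i j).2.ne
  exact (h.ne_and_not_adj_middle_branch hi hj).1

theorem middle_injective [Nontrivial α] [Nontrivial β]
    (hmid : ∀ i j, G.Adj (a i) (p i j) ∧ G.Adj (p i j) (b j)) :
    Injective (uncurry p) := by
  rintro ⟨i, j⟩ ⟨i', j'⟩ hp
  simp only [uncurry_apply_pair] at hp
  by_contra hne
  by_cases hi : i = i'
  · subst hi
    have hj : Sum.inr j' ≠ (.inr j : α ⊕ β) := by simpa [eq_comm] using hne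
    exact (h.ne_and_not_adj_middle_branch (x := .inr j') (by simp) hj).2 (hp ▸ (hmid i j').2)
  by_cases hj : j = j'
  · subst hj
    have hi' : Sum.inl i' ≠ (.inl i : α ⊕ β) := by simpa [eq_comm] using hi
    exact (h.ne_and_not_adj_middle_branch (x := .inl i') hi' (by simp)).2
      (hp ▸ (hmid i' j).1.symm)
  exact (h i j i' j' hi hj _ (by simp) _ (by simp)).1 hp

end SeparatedImpression

end Impression

theorem Fin.add_one_ne_self {n : ℕ} [NeZero n] [Nontrivial (Fin n)] (t : Fin n) : t + 1 ≠ t := by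
  have := Fin.nontrivial_iff_two_le.1 ‹_›
  simp only [ne_eq, add_eq_left, Fin.one_eq_zero_iff]
  omega

namespace Biclique

open Fin.NatCast

variable {n : ℕ} [NeZero n]

/-- The edges of the Hamiltonian cycle `a₀ b₀ a₁ b₁ ⋯ b₍ₙ₋₁₎ a₀` of `K_{n,n}` in order:
`(t, false)` is the edge `a_t b_t` and `(t, true)` the edge `b_t a_{t+1}`. The edge `k` is
`a_{hamLeft k} b_{k.1}`, and `hamJoint k` is its common end with the next edge `hamSucc k`. -/
def hamSucc : Fin n × Bool → Fin n × Bool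
  | (t, false) => (t, true)
  | (t, true) => (t + 1, false)

def hamLeft : Fin n × Bool → Fin n
  | (t, false) => t
  | (t, true) => t + 1

def hamJoint : Fin n × Bool → Fin n ⊕ Fin n
  | (t, false) => .inr t
  | (t, true) => .inl (t + 1)

theorem hamSucc_iterate_two_mul (j : ℕ) (k : Fin n × Bool) :
    hamSucc^[2 * j] k = (k.1 + (j : Fin n), k.2) := by
  induction j with
  | zero => simp
  | succ j ih =>
    rw [Nat.mul_succ, add_comm, iterate_add_apply, ih]
    rcases k with ⟨t, _ | _⟩ <;> simp [hamSucc, add_assoc]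

theorem exists_hamSucc_iterate_eq (k : Fin n × Bool) :
    ∃ j, 0 < j ∧ hamSucc^[j] (0, false) = k := by
  have hcast : (((k.1.val + n : ℕ) : Fin n)) = k.1 := by simp
  rcases k with ⟨t, _ | _⟩
  · exact ⟨2 * (t.val + n), by have := NeZero.pos n; omega,
      by rw [hamSucc_iterate_two_mul, zero_add, hcast]⟩
  · exact ⟨2 * (t.val + n) + 1, by omega,
      by rw [iterate_succ_apply', hamSucc_iterate_two_mul, zero_add, hcast]; rfl⟩

theorem hamJoint_injective : Injective (hamJoint (n := n)) := by
  rintro ⟨t, _ | _⟩ ⟨t', _ | _⟩ h <;> simp_all [hamJoint]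

theorem hamLeft_ne_and_fst_ne {k l : Fin n × Bool} (h₀ : k ≠ l) (h₁ : l ≠ hamSucc k)
    (h₂ : k ≠ hamSucc l) : hamLeft k ≠ hamLeft l ∧ k.1 ≠ l.1 := by
  rcases k with ⟨t, _ | _⟩ <;> rcases l with ⟨t', _ | _⟩ <;> grind [hamLeft, hamSucc]

theorem hamJoint_ne_inl_and_ne_inr {k l : Fin n × Bool} (h₁ : k ≠ l) (h₂ : k ≠ hamSucc l) :
    hamJoint l ≠ .inl (hamLeft k) ∧ hamJoint l ≠ .inr k.1 := by
  rcases k with ⟨t, _ | _⟩ <;> rcases l with ⟨t', _ | _⟩ <;> grind [hamLeft, hamSucc, hamJoint]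

theorem hamLeft_fst_injective [Nontrivial (Fin n)] :
    Injective fun k : Fin n × Bool => (hamLeft k, k.1) := by
  rintro ⟨t, _ | _⟩ ⟨t', _ | _⟩ h <;> grind [hamLeft, Fin.add_one_ne_self]

end Biclique

open Biclique in
theorem SeparatedImpression.exists_inducedCycle_two_mul_le {n : ℕ} [NeZero n]
    [Nontrivial (Fin n)] {V : Type*} {G : SimpleGraph V} {a b : Fin n → V}
    {p : Fin n → Fin n → V} (hmid : ∀ i j, G.Adj (a i) (p i j) ∧ G.Adj (p i j) (b j))
    (h : SeparatedImpression G a b p) : ∃ m, 2 * n ≤ m ∧ InducedCycle G m := by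
  obtain ⟨m, hm, hcycle⟩ := G.exists_inducedCycle_card_le (s := hamSucc)
    (q := fun k => p (hamLeft k) k.1) (w := fun k => Sum.elim a b (hamJoint k)) (0, false)
    exists_hamSucc_iterate_eq
    (((h.middle_injective hmid).comp hamLeft_fst_injective).sumElim
      (h.branch_injective.comp hamJoint_injective) fun _ _ => h.middle_ne_branch hmid _ _ _)
    (by rintro ⟨t, _ | _⟩; exacts [(hmid t t).2, (hmid (t + 1) t).1.symm])
    (by rintro ⟨t, _ | _⟩; exacts [(hmid (t + 1) t).2.symm, (hmid (t + 1) (t + 1)).1])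
    (fun k l hadj => by
      by_contra! hne
      have hends := hamLeft_ne_and_fst_ne (fun hkl => G.irrefl (hkl ▸ hadj)) hne.1 hne.2
      exact (h _ _ _ _ hends.1 hends.2 _ (by simp) _ (by simp)).2 hadj)
    (fun _ _ => h.not_adj_branch _ _)
    (fun k l hadj => by
      by_contra! hne
      have hjoint := hamJoint_ne_inl_and_ne_inr hne.1 hne.2
      exact (h.ne_and_not_adj_middle_branch hjoint.1 hjoint.2).2 hadj)
  exact ⟨m, by simpa [mul_comm] using hm, hcycle⟩

theorem stmt7_general {V : Type} (G : SimpleGraph V) (n : ℕ) (hn : 2 ≤ n)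
    (a b : Fin n → V) (p : Fin n → Fin n → V)
    (hmid : ∀ i j : Fin n, G.Adj (a i) (p i j) ∧ G.Adj (p i j) (b j))
    (hsep : ∀ i j i' j' : Fin n, i ≠ i' → j ≠ j' →
      ∀ u ∈ ({a i, b j, p i j} : Set V), ∀ v ∈ ({a i', b j', p i' j'} : Set V),
        u ≠ v ∧ ¬ G.Adj u v) :
    ∃ m : ℕ, 2 * n ≤ m ∧ InducedCycle G m := by
  have : NeZero n := ⟨by omega⟩
  have : Nontrivial (Fin n) := Fin.nontrivial_iff_two_le.2 hn
  exact SeparatedImpression.exists_inducedCycle_two_mul_le hmid hsep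

/-- If `G` admits an impression of `K_{n,n}` of order two (`n ≥ 2`) — given by branch
vertices `a i`, `b j` forming a stable set, middle vertices `p i j` making each edge
`a i - p i j - b j` a path of length two, such that paths of edges with no common end are
disjoint and anticomplete — then `G` has a hole of length at least `2n`. -/
theorem stmt7 {V : Type} [Fintype V] (G : SimpleGraph V) (n : ℕ) (hn : 2 ≤ n)
    (a b : Fin n → V) (p : Fin n → Fin n → V)
    (hinj : Function.Injective (Sum.elim a b : Fin n ⊕ Fin n → V))
    (hstable : ∀ i j : Fin n,
      ¬ G.Adj (a i) (a j) ∧ ¬ G.Adj (a i) (b j) ∧ ¬ G.Adj (b i) (b j))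
    (hmid : ∀ i j : Fin n, G.Adj (a i) (p i j) ∧ G.Adj (p i j) (b j))
    (hsep : ∀ i j i' j' : Fin n, i ≠ i' → j ≠ j' →
      ∀ u ∈ ({a i, b j, p i j} : Set V), ∀ v ∈ ({a i', b j', p i' j'} : Set V),
        u ≠ v ∧ ¬ G.Adj u v) :
    ∃ m : ℕ, 2 * n ≤ m ∧ InducedCycle G m :=
  stmt7_general G n hn a b p hmid hsep
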